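/- Let R be a commutative ring, I an ideal of R, and 𝔪 a proper ideal of R. Then 𝔪 is a maximal ideal of R if and only if 𝔪 ⊕ I = {(r,i) : r ∈ 𝔪, i ∈ I} is a maximal ideal of the excision ring R⊕I. -/
import Mathlib


/-- The excision ring `R ⊕ I`: the set `R × I` with componentwise addition and
multiplication `(r₁,i₁)·(r₂,i₂) = (r₁r₂, r₁i₂ + r₂i₁ + i₁i₂)`. -/
structure Excision (R : Type*) [CommRing R] (I : Ideal R) where
  /-- the `R`-component -/
  fst : R
  /-- the `I`-component -/
  snd : I

namespace Excision

variable {R : Type*} [CommRing R] {I : Ideal R}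

@[ext] theorem ext' {a b : Excision R I} (h1 : a.fst = b.fst) (h2 : (a.snd : R) = b.snd) :
    a = b := by
  cases a; cases b
  simp only [mk.injEq]
  exact ⟨h1, Subtype.ext h2⟩

instance : Add (Excision R I) := ⟨fun a b => ⟨a.fst + b.fst, a.snd + b.snd⟩⟩
instance : Neg (Excision R I) := ⟨fun a => ⟨-a.fst, -a.snd⟩⟩
instance : Zero (Excision R I) := ⟨⟨0, 0⟩⟩
instance : One (Excision R I) := ⟨⟨1, 0⟩⟩
instance : Mul (Excision R I) :=
  ⟨fun a b => ⟨a.fst * b.fst,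
    ⟨a.fst * (b.snd : R) + b.fst * (a.snd : R) + (a.snd : R) * (b.snd : R),
      I.add_mem (I.add_mem (I.mul_mem_left _ b.snd.2) (I.mul_mem_left _ a.snd.2))
        (I.mul_mem_left _ b.snd.2)⟩⟩⟩

@[simp] theorem add_fst (a b : Excision R I) : (a + b).fst = a.fst + b.fst := rfl
@[simp] theorem add_snd (a b : Excision R I) : ((a + b).snd : R) = a.snd + b.snd := rfl
@[simp] theorem mul_fst (a b : Excision R I) : (a * b).fst = a.fst * b.fst := rfl
@[simp] theorem mul_snd (a b : Excision R I) :
    ((a * b).snd : R) = a.fst * b.snd + b.fst * a.snd + a.snd * b.snd := rfl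
@[simp] theorem neg_fst (a : Excision R I) : (-a).fst = -a.fst := rfl
@[simp] theorem neg_snd (a : Excision R I) : ((-a).snd : R) = -(a.snd : R) := rfl
@[simp] theorem zero_fst : (0 : Excision R I).fst = 0 := rfl
@[simp] theorem zero_snd : ((0 : Excision R I).snd : R) = 0 := rfl
@[simp] theorem one_fst : (1 : Excision R I).fst = 1 := rfl
@[simp] theorem one_snd : ((1 : Excision R I).snd : R) = 0 := rfl

instance instCommRing : CommRing (Excision R I) where
  add_assoc a b c := by ext <;> simp <;> ring
  zero_add a := by ext <;> simp
  add_zero a := by ext <;> simp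
  add_comm a b := by ext <;> simp <;> ring
  neg_add_cancel a := by ext <;> simp
  mul_assoc a b c := by ext <;> simp <;> ring
  one_mul a := by ext <;> simp
  mul_one a := by ext <;> simp
  left_distrib a b c := by ext <;> simp <;> ring
  right_distrib a b c := by ext <;> simp <;> ring
  mul_comm a b := by ext <;> simp <;> ring
  zero_mul a := by ext <;> simp
  mul_zero a := by ext <;> simp
  nsmul := nsmulRec
  zsmul := zsmulRec

/-- The ideal `𝔪 ⊕ I = {(r,i) : r ∈ 𝔪, i ∈ I}` of the excision ring `R ⊕ I`. -/
def idealSum (𝔪 : Ideal R) (I : Ideal R) : Ideal (Excision R I) where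
  carrier := {x | x.fst ∈ 𝔪}
  zero_mem' := by simp [𝔪.zero_mem]
  add_mem' := by
    intro a b ha hb
    simpa using 𝔪.add_mem ha hb
  smul_mem' := by
    intro c x hx
    simpa using 𝔪.mul_mem_left c.fst hx

end Excision


namespace Excision

variable {R : Type*} [CommRing R] {I : Ideal R}

/-- The first projection as a ring hom. -/
def fstHom (R : Type*) [CommRing R] (I : Ideal R) : Excision R I →+* R where
  toFun := fst
  map_one' := rfl
  map_mul' _ _ := rfl
  map_zero' := rfl
  map_add' _ _ := rfl

theorem fstHom_surjective : Function.Surjective (fstHom R I) :=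
  fun r => ⟨⟨r, 0⟩, rfl⟩

theorem idealSum_eq_comap (𝔪 : Ideal R) :
    idealSum 𝔪 I = Ideal.comap (fstHom R I) 𝔪 := rfl

end Excision

/-- Let `R` be a commutative ring, `I` an ideal of `R`, and `𝔪` a proper ideal of `R`.
Then `𝔪` is a maximal ideal of `R` if and only if `𝔪 ⊕ I` is a maximal ideal of the
excision ring `R ⊕ I`. -/
theorem maximal_iff_excision_maximal
    (R : Type) [CommRing R] (I : Ideal R) (𝔪 : Ideal R) (h𝔪 : 𝔪 ≠ ⊤) :
    𝔪.IsMaximal ↔ (Excision.idealSum 𝔪 I).IsMaximal := by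
  rw [Excision.idealSum_eq_comap]
  constructor
  · intro H
    exact Ideal.comap_isMaximal_of_surjective _ Excision.fstHom_surjective
  · intro H
    have hmap : Ideal.map (Excision.fstHom R I) (Ideal.comap (Excision.fstHom R I) 𝔪) = 𝔪 :=
      Ideal.map_comap_of_surjective _ Excision.fstHom_surjective 𝔪
    rcases Ideal.map_eq_top_or_isMaximal_of_surjective _ Excision.fstHom_surjective H with h | h
    · exact absurd (hmap ▸ h) h𝔪
    · exact hmap ▸ h
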